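/- Let n ≥ 4, p = p₀(n) = (n+1+√(n²+10n−7))/(2(n−1)), let R > 0 with 8R ≥ 1, and let C, ε > 0. Define a_j = 3·4^{j−1} − 1, C₀ = ( (p−1)C / ( 2^{n−1+(n+1)p/2} · 3^{np−1} · p ) )^{1/(p−1)}, C_p = 2^{(n+1)p} p, C₁ = C^{p+1} ε^{p²} / ( 2^{n−2} · 3^{(n−1)p/2} · ( n − (n−1)p/2 )^p ), C_j = exp{ p^{j−1} log( C₀ C₁ C_p^{−S(j)} ) − log C₀ } for j ≥ 2 where S(j) = Σ_{k=1}^{j−1} k/p^k, D = 3²·2^{3n−2−3(n−1)p/2}, K_j(t) = ( C_j / (16^j D) ) ( (1/2) log t )^{(p^j−1)/(p−1)}, I(j) = [ (2(a_j+2)R)², (2(a_{j+1}+2)R)² ], and E = 2 ( 2^{n−2}·3^{(n−1)p/2}·(n−(n−1)p/2)^p · e · C_p^{S(∞)} / (C₀ C^{p+1}) )^{(p−1)/p}, where S(∞) = Σ_{k=1}^{∞} k/p^k. Then for every integer j ≥ 2 and every t ∈ I(j) with ε^{p(p−1)} log t ≥ E, one has K_j(t) ≥ exp{ p^{j−1}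 − j log 16 − log(C₀D) − (1/(p−1)) log( log( 2(a_{j+1}+2)R ) ) }; consequently, for every K* > 0 there exists an integer J, depending only on n, p, R, C (and not on ε or t), such that K_j(t) ≥ K* for all j ≥ J and all t ∈ I(j) with ε^{p(p−1)} log t ≥ E. -/

import Mathlib

/-- `a_j = 3·4^{j-1} - 1`. -/
noncomputable def aseq (j : ℕ) : ℝ := 3 * 4 ^ (j - 1) - 1

/-- `C₀ = ((p-1)C / (2^{n-1+(n+1)p/2}·3^{np-1}·p))^{1/(p-1)}`. -/
noncomputable def Czero (n : ℕ) (p C : ℝ) : ℝ :=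
  ((p - 1) * C /
      ((2 : ℝ) ^ ((n : ℝ) - 1 + ((n : ℝ) + 1) * p / 2) * (3 : ℝ) ^ ((n : ℝ) * p - 1) * p)) ^
    (1 / (p - 1))

/-- `C_p = 2^{(n+1)p} p`. -/
noncomputable def Cpow (n : ℕ) (p : ℝ) : ℝ := (2 : ℝ) ^ (((n : ℝ) + 1) * p) * p

/-- `C₁ = C^{p+1} ε^{p²} / (2^{n-2}·3^{(n-1)p/2}·(n-(n-1)p/2)^p)`. -/
noncomputable def Cone (n : ℕ) (p C ε : ℝ) : ℝ :=
  C ^ (p + 1) * ε ^ (p ^ 2) /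
    ((2 : ℝ) ^ ((n : ℝ) - 2) * (3 : ℝ) ^ (((n : ℝ) - 1) * p / 2) *
      ((n : ℝ) - ((n : ℝ) - 1) * p / 2) ^ p)

/-- `S(j) = Σ_{k=1}^{j-1} k/p^k` (the `k = 0` term vanishes). -/
noncomputable def Ssum (p : ℝ) (j : ℕ) : ℝ := ∑ k ∈ Finset.range j, (k : ℝ) / p ^ k

/-- `S(∞) = Σ_{k=1}^{∞} k/p^k`. -/
noncomputable def Sinf (p : ℝ) : ℝ := ∑' k : ℕ, (k : ℝ) / p ^ k

/-- The iteration constants: `C_j = C₁` for `j = 1` and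
`C_j = exp{p^{j-1} log(C₀ C₁ C_p^{-S(j)}) - log C₀}` for `j ≥ 2`. -/
noncomputable def Cseq (n : ℕ) (p C ε : ℝ) (j : ℕ) : ℝ :=
  if j = 1 then Cone n p C ε
  else Real.exp (p ^ (j - 1) * Real.log (Czero n p C * Cone n p C ε * Cpow n p ^ (-Ssum p j))
    - Real.log (Czero n p C))

/-- `D = 3²·2^{3n-2-3(n-1)p/2}`. -/
noncomputable def Dconst (n : ℕ) (p : ℝ) : ℝ :=
  3 ^ 2 * (2 : ℝ) ^ (3 * (n : ℝ) - 2 - 3 * ((n : ℝ) - 1) * p / 2)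

/-- `K_j(t) = (C_j / (16^j D)) ((1/2) log t)^{(p^j-1)/(p-1)}`. -/
noncomputable def Kcoef (n : ℕ) (p C ε : ℝ) (j : ℕ) (t : ℝ) : ℝ :=
  Cseq n p C ε j / (16 ^ j * Dconst n p) * (1 / 2 * Real.log t) ^ ((p ^ j - 1) / (p - 1))

/-- `E = 2 (2^{n-2}·3^{(n-1)p/2}·(n-(n-1)p/2)^p · e · C_p^{S(∞)} / (C₀ C^{p+1}))^{(p-1)/p}`. -/
noncomputable def Econst (n : ℕ) (p C : ℝ) : ℝ :=
  2 * (((2 : ℝ) ^ ((n : ℝ) - 2) * (3 : ℝ) ^ (((n : ℝ) - 1) * p / 2) *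
      ((n : ℝ) - ((n : ℝ) - 1) * p / 2) ^ p * Real.exp 1 * Cpow n p ^ Sinf p) /
    (Czero n p C * C ^ (p + 1))) ^ ((p - 1) / p)

/-!
Since `p > 1`, the partial sums `S(j)` increase to `S(∞) < ∞`, and `E` is chosen so that
`ε^{p(p-1)} log t ≥ E` forces `L_j(t) ≥ e · C_p^{S(∞) - S(j)} ≥ e`.
With `x = (1/2) log t`,
`log K_j(t) = p^{j-1} log L_j(t) - (1/(p-1)) log x - log(C₀ D) - j log 16`,
and `x ≤ log(2(a_{j+1}+2)R)` on `I(j)`; this is the lower bound. Its exponent is `p^{j-1}`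
minus `O(j)`, because `2(a_{j+1}+2) ≤ 8^{j+1}`, so it tends to infinity independently
of `ε` and `t`.
-/

open Real Filter Topology

noncomputable def criticalExponent (n : ℝ) : ℝ :=
  (n + 1 + √(n ^ 2 + 10 * n - 7)) / (2 * (n - 1))

section criticalExponent

variable {n : ℝ}

lemma criticalExponent_mul (hn : 1 < n) :
    criticalExponent n * (2 * (n - 1)) = n + 1 + √(n ^ 2 + 10 * n - 7) :=
  div_mul_cancel₀ _ (by linarith)

lemma one_lt_criticalExponent (hn : 1 < n) : 1 < criticalExponent n := by
  have hsq : n - 3 < √(n ^ 2 + 10 * n - 7) :=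
    lt_sqrt_of_sq_lt (by nlinarith)
  nlinarith [criticalExponent_mul hn]

lemma criticalExponent_lt (hn : 1 < n) : (n - 1) * criticalExponent n / 2 < n := by
  have hsq : √(n ^ 2 + 10 * n - 7) < 3 * n - 1 :=
    (sqrt_lt' (by linarith)).2 (by nlinarith)
  nlinarith [criticalExponent_mul hn]

end criticalExponent

lemma tendsto_pow_sub_mul_atTop {p : ℝ} (hp : 1 < p) (α : ℝ) :
    Tendsto (fun j : ℕ => p ^ j - α * j) atTop atTop := by
  have h : Tendsto (fun j : ℕ => 1 - α * ((j : ℝ) ^ 1 / p ^ j)) atTop (𝓝 1) := by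
    simpa using tendsto_const_nhds.sub
      ((tendsto_pow_const_div_const_pow_of_one_lt 1 hp).const_mul α)
  refine ((tendsto_pow_atTop_atTop_of_one_lt hp).atTop_mul_pos one_pos h).congr fun j => ?_
  have : p ^ j ≠ 0 := pow_ne_zero _ (by linarith)
  field_simp

lemma Real.log_le_abs (x : ℝ) : log x ≤ |x| :=
  log_abs x ▸ log_le_self (abs_nonneg x)

lemma Real.abs_log_mul_le {a : ℝ} (ha : 1 ≤ a) (b : ℝ) :
    |log (a * b)| ≤ log a + |log b| := by
  rcases eq_or_ne b 0 with rfl | hb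
  · simp [log_nonneg ha]
  rw [log_mul (by linarith) hb]
  exact (abs_add_le _ _).trans_eq (by rw [abs_of_nonneg (log_nonneg ha)])

noncomputable def ConeDenom (n : ℕ) (p : ℝ) : ℝ :=
  (2 : ℝ) ^ ((n : ℝ) - 2) * (3 : ℝ) ^ (((n : ℝ) - 1) * p / 2) *
    ((n : ℝ) - ((n : ℝ) - 1) * p / 2) ^ p

/-- `L_j(t) = Lfactor n p C ε j * ((1/2) log t)^{p/(p-1)}`. -/
noncomputable def Lfactor (n : ℕ) (p C ε : ℝ) (j : ℕ) : ℝ :=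
  Czero n p C * Cone n p C ε * Cpow n p ^ (-Ssum p j)

lemma Dconst_pos (n : ℕ) (p : ℝ) : 0 < Dconst n p := by
  unfold Dconst
  positivity

section constants

variable {p C : ℝ}

lemma ConeDenom_pos {n : ℕ} (h : ((n : ℝ) - 1) * p / 2 < n) : 0 < ConeDenom n p := by
  unfold ConeDenom
  have := rpow_pos_of_pos (sub_pos.2 h) p
  positivity

lemma Czero_pos (n : ℕ) (hp : 1 < p) (hC : 0 < C) : 0 < Czero n p C := by
  have := sub_pos.2 hp
  have : 0 < p := by linarith
  unfold Czero
  positivity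

lemma Cpow_pos (n : ℕ) (hp : 0 < p) : 0 < Cpow n p := by
  unfold Cpow
  positivity

lemma one_le_Cpow (n : ℕ) (hp : 1 ≤ p) : 1 ≤ Cpow n p := by
  unfold Cpow
  have : 1 ≤ (2 : ℝ) ^ (((n : ℝ) + 1) * p) := one_le_rpow one_le_two (by positivity)
  nlinarith

lemma Cone_pos {n : ℕ} (h : ((n : ℝ) - 1) * p / 2 < n) (hC : 0 < C) {ε : ℝ} (hε : 0 < ε) :
    0 < Cone n p C ε := by
  have := ConeDenom_pos h
  rw [Cone, ← ConeDenom]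
  positivity

lemma summable_natCast_div_pow (hp : 1 < p) :
    Summable fun k : ℕ => (k : ℝ) / p ^ k := by
  have hr : ‖p⁻¹‖ < 1 := by
    rw [norm_inv, norm_of_nonneg (by linarith)]
    exact inv_lt_one_of_one_lt₀ hp
  refine (summable_pow_mul_geometric_of_norm_lt_one 1 hr).congr fun k => ?_
  rw [pow_one, inv_pow, div_eq_mul_inv]

lemma Ssum_le_Sinf (hp : 1 < p) (j : ℕ) : Ssum p j ≤ Sinf p :=
  (summable_natCast_div_pow hp).sum_le_tsum _ fun k _ => by positivity

end constants

section estimates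

variable {n : ℕ} {p C : ℝ}

lemma Lfactor_pos (hp : 1 < p) (hB : ((n : ℝ) - 1) * p / 2 < n) (hC : 0 < C) {ε : ℝ}
    (hε : 0 < ε) (j : ℕ) : 0 < Lfactor n p C ε j := by
  have := Czero_pos n hp hC
  have := Cone_pos hB hC hε
  have := rpow_pos_of_pos (Cpow_pos n (zero_lt_one.trans hp)) (-Ssum p j)
  unfold Lfactor
  positivity

lemma Econst_half_rpow (hp : 1 < p) (hB : ((n : ℝ) - 1) * p / 2 < n) (hC : 0 < C) :
    (Econst n p C / 2) ^ (p / (p - 1)) =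
      ConeDenom n p * exp 1 * Cpow n p ^ Sinf p / (Czero n p C * C ^ (p + 1)) := by
  have := ConeDenom_pos hB
  have := Czero_pos n hp hC
  have := rpow_pos_of_pos (Cpow_pos n (zero_lt_one.trans hp)) (Sinf p)
  have hp' : p - 1 ≠ 0 := by linarith
  rw [show Econst n p C / 2 = (ConeDenom n p * exp 1 * Cpow n p ^ Sinf p /
      (Czero n p C * C ^ (p + 1))) ^ ((p - 1) / p) by rw [Econst, ConeDenom]; ring,
    ← rpow_mul (by positivity), show (p - 1) / p * (p / (p - 1)) = 1 by field_simp, rpow_one]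

lemma Econst_pos (hp : 1 < p) (hB : ((n : ℝ) - 1) * p / 2 < n) (hC : 0 < C) :
    0 < Econst n p C := by
  have := ConeDenom_pos hB
  have := Czero_pos n hp hC
  have := rpow_pos_of_pos (Cpow_pos n (zero_lt_one.trans hp)) (Sinf p)
  rw [Econst, ← ConeDenom]
  positivity

/-- The choice of `E` makes `L_j(t) ≥ e · C_p^{S(∞) - S(j)}`. -/
lemma exp_one_le_Lfactor_mul (hp : 1 < p) (hB : ((n : ℝ) - 1) * p / 2 < n) (hC : 0 < C)
    {ε x : ℝ} (hε : 0 < ε) (hx : Econst n p C / 2 ≤ ε ^ (p * (p - 1)) * x) (j : ℕ) :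
    exp 1 ≤ Lfactor n p C ε j * x ^ (p / (p - 1)) := by
  have hu : 0 < ε ^ (p * (p - 1)) := rpow_pos_of_pos hε _
  have hCp := Cpow_pos n (zero_lt_one.trans hp)
  have := ConeDenom_pos hB
  have := Czero_pos n hp hC
  have := rpow_pos_of_pos hC (p + 1)
  have := rpow_pos_of_pos hε (p ^ 2)
  have := rpow_pos_of_pos hCp (Ssum p j)
  have hE := (Econst_pos hp hB hC).le
  calc exp 1 ≤ exp 1 * Cpow n p ^ (Sinf p - Ssum p j) :=
        le_mul_of_one_le_right (exp_pos 1).le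
          (one_le_rpow (one_le_Cpow n hp.le) (sub_nonneg.2 (Ssum_le_Sinf hp j)))
    _ = Lfactor n p C ε j * (Econst n p C / 2 / ε ^ (p * (p - 1))) ^ (p / (p - 1)) := by
      rw [div_rpow (by positivity) hu.le, Econst_half_rpow hp hB hC, ← rpow_mul hε.le,
        show p * (p - 1) * (p / (p - 1)) = p ^ 2 by field_simp [show p - 1 ≠ 0 by linarith],
        Lfactor, Cone, ← ConeDenom, rpow_sub hCp, rpow_neg hCp.le]
      field_simp
    _ ≤ Lfactor n p C ε j * x ^ (p / (p - 1)) := by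
      have := sub_pos.2 hp
      have := Lfactor_pos hp hB hC hε j
      gcongr
      exact (div_le_iff₀' hu).2 hx

lemma Kcoef_eq_exp (hp : 1 < p) (hB : ((n : ℝ) - 1) * p / 2 < n) (hC : 0 < C) {ε t : ℝ}
    (hε : 0 < ε) {j : ℕ} (hj : 2 ≤ j) (hx : 0 < 1 / 2 * log t) :
    Kcoef n p C ε j t =
      exp (p ^ (j - 1) * log (Lfactor n p C ε j * (1 / 2 * log t) ^ (p / (p - 1)))
        - 1 / (p - 1) * log (1 / 2 * log t) - log (Czero n p C * Dconst n p) - j * log 16) := by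
  have hD := Dconst_pos n p
  have h16 : (16 : ℝ) ^ j * Dconst n p = exp (j * log 16 + log (Dconst n p)) := by
    rw [exp_add, exp_log hD, ← log_pow, exp_log (by positivity)]
  have hpj : p ^ (j - 1) * p = p ^ j := by rw [← pow_succ]; congr 1; omega
  have hp' : p - 1 ≠ 0 := by linarith
  rw [Kcoef, Cseq, if_neg (by omega), h16, rpow_def_of_pos hx, div_eq_mul_inv, ← exp_neg,
    ← exp_add, ← exp_add, log_mul (Lfactor_pos hp hB hC hε j).ne' (rpow_pos_of_pos hx _).ne',
    log_rpow hx, log_mul (Czero_pos n hp hC).ne' hD.ne', ← Lfactor, ← hpj]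
  congr 1
  field_simp
  ring

lemma exp_le_Kcoef (hp : 1 < p) (hB : ((n : ℝ) - 1) * p / 2 < n) (hC : 0 < C) {ε t A : ℝ}
    (hε : 0 < ε) {j : ℕ} (hj : 2 ≤ j) (ht : 0 ≤ t) (htA : t ≤ A ^ 2)
    (hE : Econst n p C ≤ ε ^ (p * (p - 1)) * log t) :
    exp (p ^ (j - 1) - j * log 16 - log (Czero n p C * Dconst n p) - 1 / (p - 1) * log (log A))
      ≤ Kcoef n p C ε j t := by
  have hu : 0 < ε ^ (p * (p - 1)) := rpow_pos_of_pos hε _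
  have hE0 := Econst_pos hp hB hC
  have hx : 0 < 1 / 2 * log t := by nlinarith
  have hEx : Econst n p C / 2 ≤ ε ^ (p * (p - 1)) * (1 / 2 * log t) := by linarith
  have hL : 1 ≤ log (Lfactor n p C ε j * (1 / 2 * log t) ^ (p / (p - 1))) :=
    (le_log_iff_exp_le (mul_pos (Lfactor_pos hp hB hC hε j) (rpow_pos_of_pos hx _))).2
      (exp_one_le_Lfactor_mul hp hB hC hε hEx j)
  have ht0 : 0 < t := ht.lt_of_ne (by rintro rfl; simp at hx)
  have hxA : 1 / 2 * log t ≤ log A := by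
    have := log_le_log ht0 htA
    rw [log_pow] at this
    push_cast at this
    linarith
  have hlogx := mul_le_mul_of_nonneg_left (log_le_log hx hxA)
    (one_div_nonneg.2 (sub_nonneg.2 hp.le))
  have hLp := mul_le_mul_of_nonneg_left hL (pow_nonneg (zero_le_one.trans hp.le) (j - 1))
  rw [Kcoef_eq_exp hp hB hC hε hj hx, exp_le_exp]
  linarith

end estimates

lemma one_le_two_mul_aseq_succ_add_two (j : ℕ) : 1 ≤ 2 * (aseq (j + 1) + 2) := by
  have := one_le_pow₀ (M₀ := ℝ) (n := j) (by norm_num : (1 : ℝ) ≤ 4)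
  rw [aseq, Nat.add_sub_cancel]
  linarith

lemma two_mul_aseq_succ_add_two_le (j : ℕ) : 2 * (aseq (j + 1) + 2) ≤ 8 ^ (j + 1) := by
  have := pow_le_pow_left₀ (by norm_num) (by norm_num : (4 : ℝ) ≤ 8) j
  have := one_le_pow₀ (M₀ := ℝ) (n := j) (by norm_num : (1 : ℝ) ≤ 8)
  rw [aseq, Nat.add_sub_cancel, pow_succ]
  linarith

lemma log_log_two_mul_aseq_succ_add_two_mul_le (j : ℕ) (R : ℝ) :
    log (log (2 * (aseq (j + 1) + 2) * R)) ≤ (j + 1) * log 8 + |log R| :=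
  calc log (log (2 * (aseq (j + 1) + 2) * R))
      ≤ |log (2 * (aseq (j + 1) + 2) * R)| := log_le_abs _
    _ ≤ log (2 * (aseq (j + 1) + 2)) + |log R| :=
      abs_log_mul_le (one_le_two_mul_aseq_succ_add_two j) R
    _ ≤ log (8 ^ (j + 1)) + |log R| := by
      gcongr
      · linarith [one_le_two_mul_aseq_succ_add_two j]
      · exact two_mul_aseq_succ_add_two_le j
    _ = (j + 1) * log 8 + |log R| := by rw [log_pow]; push_cast; ring

lemma tendsto_exponent_atTop {p : ℝ} (hp : 1 < p) (c R : ℝ) :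
    Tendsto (fun j : ℕ => p ^ (j - 1) - j * log 16 - c
      - 1 / (p - 1) * log (log (2 * (aseq (j + 1) + 2) * R))) atTop atTop := by
  rw [← tendsto_add_atTop_iff_nat 1]
  refine tendsto_atTop_mono (fun j => ?_) (tendsto_atTop_add_const_right _
    (-(log 16 + c + (2 * log 8 + |log R|) / (p - 1)))
    (tendsto_pow_sub_mul_atTop hp (log 16 + log 8 / (p - 1))))
  have := mul_le_mul_of_nonneg_left (log_log_two_mul_aseq_succ_add_two_mul_le (j + 1) R)
    (one_div_nonneg.2 (sub_nonneg.2 hp.le))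
  simp only [Nat.add_sub_cancel]
  push_cast at this ⊢
  linear_combination this

theorem Kcoef_blowup_general
    (n : ℕ) (hn : 4 ≤ n) (p R C : ℝ)
    (hp : p = ((n : ℝ) + 1 + Real.sqrt ((n : ℝ) ^ 2 + 10 * (n : ℝ) - 7)) / (2 * ((n : ℝ) - 1)))
    (hC : 0 < C) :
    (∀ ε : ℝ, 0 < ε → ∀ j : ℕ, 2 ≤ j → ∀ t : ℝ,
      (2 * (aseq j + 2) * R) ^ 2 ≤ t → t ≤ (2 * (aseq (j + 1) + 2) * R) ^ 2 →
      Econst n p C ≤ ε ^ (p * (p - 1)) * Real.log t →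
      Real.exp (p ^ (j - 1) - (j : ℝ) * Real.log 16 - Real.log (Czero n p C * Dconst n p)
          - 1 / (p - 1) * Real.log (Real.log (2 * (aseq (j + 1) + 2) * R)))
        ≤ Kcoef n p C ε j t) ∧
    (∀ Kstar : ℝ, 0 < Kstar → ∃ J : ℕ, ∀ ε : ℝ, 0 < ε → ∀ j : ℕ, J ≤ j → ∀ t : ℝ,
      (2 * (aseq j + 2) * R) ^ 2 ≤ t → t ≤ (2 * (aseq (j + 1) + 2) * R) ^ 2 →
      Econst n p C ≤ ε ^ (p * (p - 1)) * Real.log t →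
      Kstar ≤ Kcoef n p C ε j t) := by
  have hn1 : (1 : ℝ) < n := by exact_mod_cast (by omega : 1 < n)
  have hp1 : 1 < p := by rw [hp]; exact one_lt_criticalExponent hn1
  have hB : ((n : ℝ) - 1) * p / 2 < n := by rw [hp]; exact criticalExponent_lt hn1
  refine ⟨fun ε hε j hj t ht htA hE =>
    exp_le_Kcoef hp1 hB hC hε hj ((sq_nonneg _).trans ht) htA hE, fun Kstar _ => ?_⟩
  obtain ⟨J, hJ⟩ := eventually_atTop.1 <| (tendsto_exp_atTop.comp
    (tendsto_exponent_atTop hp1 (log (Czero n p C * Dconst n p)) R)).eventually_ge_atTop Kstar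
  exact ⟨max J 2, fun ε hε j hj t ht htA hE => (hJ j (le_of_max_le_left hj)).trans
    (exp_le_Kcoef hp1 hB hC hε (le_of_max_le_right hj) ((sq_nonneg _).trans ht) htA hE)⟩

/-- **Blow-up of the coefficients `K_j(t)`** (the key quantitative step in the
proof of the main theorem). For `j ≥ 2` and `t ∈ I(j) = [(2(a_j+2)R)², (2(a_{j+1}+2)R)²]`
with `ε^{p(p-1)} log t ≥ E`, one has
`K_j(t) ≥ exp{p^{j-1} - j log 16 - log(C₀D) - (1/(p-1)) log(log(2(a_{j+1}+2)R))}`;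
consequently for every `K* > 0` there is `J` (depending only on `n, p, R, C`,
not on `ε` or `t`) with `K_j(t) ≥ K*` for all `j ≥ J` and all such `t`. -/
theorem Kcoef_blowup
    (n : ℕ) (hn : 4 ≤ n) (p R C : ℝ)
    (hp : p = ((n : ℝ) + 1 + Real.sqrt ((n : ℝ) ^ 2 + 10 * (n : ℝ) - 7)) / (2 * ((n : ℝ) - 1)))
    (hR : 0 < R) (h8R : 1 ≤ 8 * R) (hC : 0 < C) :
    (∀ ε : ℝ, 0 < ε → ∀ j : ℕ, 2 ≤ j → ∀ t : ℝ,
      (2 * (aseq j + 2) * R) ^ 2 ≤ t → t ≤ (2 * (aseq (j + 1) + 2) * R) ^ 2 →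
      Econst n p C ≤ ε ^ (p * (p - 1)) * Real.log t →
      Real.exp (p ^ (j - 1) - (j : ℝ) * Real.log 16 - Real.log (Czero n p C * Dconst n p)
          - 1 / (p - 1) * Real.log (Real.log (2 * (aseq (j + 1) + 2) * R)))
        ≤ Kcoef n p C ε j t) ∧
    (∀ Kstar : ℝ, 0 < Kstar → ∃ J : ℕ, ∀ ε : ℝ, 0 < ε → ∀ j : ℕ, J ≤ j → ∀ t : ℝ,
      (2 * (aseq j + 2) * R) ^ 2 ≤ t → t ≤ (2 * (aseq (j + 1) + 2) * R) ^ 2 →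
      Econst n p C ≤ ε ^ (p * (p - 1)) * Real.log t →
      Kstar ≤ Kcoef n p C ε j t) :=
  Kcoef_blowup_general n hn p R C hp hC
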